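/- For every θ ∈ Â(qⁿ), the character of G(qⁿ) induced from the right centraliser coincides with the supercharacter induced from the left centraliser: for all g ∈ G(qⁿ), |L(θ)|⁻¹ Σ_{x ∈ G(qⁿ)} ν_θ°(x g x⁻¹) = |R(θ)|⁻¹ Σ_{x ∈ G(qⁿ)} ν'_θ°(x g x⁻¹), where R(θ) = {g ∈ G(qⁿ) : θ(a g⁻¹) = θ(a) for all a ∈ A(qⁿ)}, ν'_θ : R(θ) → ℂˣ is ν'_θ(g) = θ(g−1), and ν'_θ° is its extension by zero. -/

import Mathlib

open scoped BigOperators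

namespace Shintani

variable {A : Type*} [NonUnitalRing A]

/-- The product of the non-empty word `a :: l` in a non-unital ring. -/
def wordProd : A → List A → A
  | a, [] => a
  | a, b :: l => wordProd (a * b) l

/-- A non-unital ring is nilpotent: there is `N ≥ 1` such that every product of `N`
elements vanishes. -/
def IsNilpotentRing (A : Type*) [NonUnitalRing A] : Prop :=
  ∃ N : ℕ, 0 < N ∧ ∀ (a : A) (l : List A), N ≤ l.length + 1 → wordProd a l = 0

/-- The algebra group `G = 1 + A` attached to the non-unital (nilpotent) ring `A`,
realized as the group of quasiregular elements of `A`, i.e. the units of the monoid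
structure `x * y = x + y + x * y` on `A` (`0` playing the role of `1 = 1 + 0`). -/
abbrev AlgGrp (A : Type*) [NonUnitalRing A] := (PreQuasiregular A)ˣ

/-- For `g = 1 + a` in the algebra group, `gval g = g - 1 = a`. -/
def gval (g : AlgGrp A) : A := g.val.val

lemma gval_injective : Function.Injective (gval (A := A)) := by
  intro u v h
  exact Units.ext (congrArg PreQuasiregular.mk h)

@[simp] lemma gval_one : gval (1 : AlgGrp A) = 0 := rfl

@[simp] lemma gval_mul (g h : AlgGrp A) :
    gval (g * h) = gval h + gval g + gval g * gval h := rfl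

/-- `1 + a ↦ 1 + F a` as a monoid homomorphism of `PreQuasiregular A`, for a ring
automorphism `F` of `A`. -/
def preqHom (F : A ≃+* A) : PreQuasiregular A →* PreQuasiregular A where
  toFun x := ⟨F x.val⟩
  map_one' := congrArg PreQuasiregular.mk (map_zero F)
  map_mul' x y := congrArg PreQuasiregular.mk (by simp)

/-- The group homomorphism `G → G`, `1 + a ↦ 1 + F a`, induced by a ring automorphism
`F` of `A` (e.g. by the Frobenius map). -/
def algGrpMap (F : A ≃+* A) : AlgGrp A →* AlgGrp A := Units.map (preqHom F)

@[simp] lemma gval_algGrpMap (F : A ≃+* A) (g : AlgGrp A) :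
    gval (algGrpMap F g) = F (gval g) := rfl

/-- Iterates of `algGrpMap F`. -/
def algGrpIter (F : A ≃+* A) : ℕ → (AlgGrp A →* AlgGrp A)
  | 0 => MonoidHom.id _
  | n + 1 => (algGrpMap F).comp (algGrpIter F n)

lemma gval_algGrpIter (F : A ≃+* A) (n : ℕ) (g : AlgGrp A) :
    gval (algGrpIter F n g) = (⇑F)^[n] (gval g) := by
  induction n generalizing g with
  | zero => rfl
  | succ n ih =>
      simp only [algGrpIter, MonoidHom.comp_apply, gval_algGrpMap, ih,
        Function.iterate_succ_apply']

/-- The additive subgroup `A(qⁿ) = {a ∈ A | Fⁿ(a) = a}` of elements fixed by `F^[n]`. -/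
def fixedAdd (F : A ≃+* A) (n : ℕ) : AddSubgroup A where
  carrier := {a | (⇑F)^[n] a = a}
  add_mem' := by
    intro a b ha hb
    simp only [Set.mem_setOf_eq] at *
    rw [iterate_map_add, ha, hb]
  zero_mem' := by
    simp only [Set.mem_setOf_eq]
    rw [iterate_map_zero]
  neg_mem' := by
    intro a ha
    simp only [Set.mem_setOf_eq] at *
    rw [iterate_map_neg, ha]

@[simp] lemma mem_fixedAdd {F : A ≃+* A} {n : ℕ} {a : A} :
    a ∈ fixedAdd F n ↔ (⇑F)^[n] a = a := Iff.rfl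

/-- The subgroup `G(qⁿ) = {g ∈ G | Fⁿ(g) = g}` of the algebra group. -/
def Gfix (F : A ≃+* A) (n : ℕ) : Subgroup (AlgGrp A) where
  carrier := {g | (⇑F)^[n] (gval g) = gval g}
  one_mem' := by
    simp only [Set.mem_setOf_eq, gval_one]
    rw [iterate_map_zero]
  mul_mem' := by
    intro g h hg hh
    simp only [Set.mem_setOf_eq, gval_mul] at *
    rw [iterate_map_add, iterate_map_add, iterate_map_mul, hg, hh]
  inv_mem' := by
    intro g hg
    simp only [Set.mem_setOf_eq] at *
    have h1 : algGrpIter F n g = g := gval_injective (by rw [gval_algGrpIter]; exact hg)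
    have h2 : algGrpIter F n g⁻¹ = g⁻¹ := by rw [map_inv, h1]
    rw [← gval_algGrpIter, h2]

/-- The left product `g·a = (1+b)a = a + ba` of `a ∈ A` by `g = 1 + b ∈ G`. -/
def lact (g : AlgGrp A) (a : A) : A := a + gval g * a

/-- The right product `a·g = a(1+c) = a + ac` of `a ∈ A` by `g = 1 + c ∈ G`. -/
def ract (a : A) (g : AlgGrp A) : A := a + a * gval g

/-- The two-sided product `g·a·h` for `g, h ∈ G` and `a ∈ A`. -/
def bact (g : AlgGrp A) (a : A) (h : AlgGrp A) : A := ract (lact g a) h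

/-- The left centraliser `L(θ) = {g ∈ G | θ(g⁻¹a) = θ(a) for all a ∈ A}` of an additive
character `θ` of `A`. -/
def Lcent (θ : AddChar A ℂˣ) : Set (AlgGrp A) := {g | ∀ a : A, θ (lact g⁻¹ a) = θ a}

/-- The right centraliser `R(θ) = {g ∈ G | θ(ag⁻¹) = θ(a) for all a ∈ A}`. -/
def Rcent (θ : AddChar A ℂˣ) : Set (AlgGrp A) := {g | ∀ a : A, θ (ract a g⁻¹) = θ a}

/-- `𝓛(θ) = {b ∈ A | θ(bu) = 1 for all u ∈ A}`. -/
def Lsub (θ : AddChar A ℂˣ) : Set A := {b | ∀ u : A, θ (b * u) = 1}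

open Classical in
/-- `ν_θ°`, the extension of the linear character `ν_θ(g) = θ(g-1)` of `L(θ)` by zero. -/
noncomputable def nuz (θ : AddChar A ℂˣ) : AlgGrp A → ℂ :=
  fun g => if g ∈ Lcent θ then (θ (gval g) : ℂ) else 0

open Classical in
/-- `ν'_θ°`, the extension of the linear character `ν'_θ(g) = θ(g-1)` of `R(θ)` by zero. -/
noncomputable def nuzR (θ : AddChar A ℂˣ) : AlgGrp A → ℂ :=
  fun g => if g ∈ Rcent θ then (θ (gval g) : ℂ) else 0

/-- The supercharacter `ξ_θ = Ind_{L(θ)}^G ν_θ`. -/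
noncomputable def xi (θ : AddChar A ℂˣ) : AlgGrp A → ℂ :=
  fun g => (Nat.card (Lcent θ) : ℂ)⁻¹ * ∑ᶠ x : AlgGrp A, nuz θ (x * g * x⁻¹)

/-- `θ ∘ F`, the composition of an additive character with a ring automorphism. -/
def chF (F : A ≃+* A) (θ : AddChar A ℂˣ) : AddChar A ℂˣ :=
  θ.compAddMonoidHom F.toAddEquiv.toAddMonoidHom

@[simp] lemma chF_apply (F : A ≃+* A) (θ : AddChar A ℂˣ) (a : A) :
    chF F θ a = θ (F a) := rfl

/-- The two-sided orbit `G θ G` of an additive character `θ` of `A`. -/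
def Orb (θ : AddChar A ℂˣ) : Set (AddChar A ℂˣ) :=
  {θ' | ∃ g h : AlgGrp A, ∀ a : A, θ' a = θ (bact g a h)}

/-- The trace map `Tr_n(a) = a + F(a) + ⋯ + F^{n-1}(a)`. -/
def trMap (F : A ≃+* A) (n : ℕ) (a : A) : A := ∑ i ∈ Finset.range n, (⇑F)^[i] a

/-- Membership in the left centraliser `L(θ) ⊆ G(qⁿ)` of a character `θ ∈ Â(qⁿ)`:
`g ∈ G(qⁿ)` and `θ(g⁻¹a) = θ(a)` for all `a ∈ A(qⁿ)`. -/
def LcP (F : A ≃+* A) (n : ℕ) (θ : AddChar (fixedAdd F n) ℂˣ) (g : AlgGrp A) : Prop :=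
  ((⇑F)^[n] (gval g) = gval g) ∧
    ∀ (a w : fixedAdd F n), (w : A) = lact g⁻¹ (a : A) → θ w = θ a

open Classical in
/-- `ν_θ°` for `θ ∈ Â(qⁿ)`, the extension of `ν_θ` from `L(θ)` by zero. -/
noncomputable def nuzSub (F : A ≃+* A) (n : ℕ) (θ : AddChar (fixedAdd F n) ℂˣ) :
    AlgGrp A → ℂ :=
  fun g => if h : LcP F n θ g then (θ ⟨gval g, mem_fixedAdd.mpr h.1⟩ : ℂ) else 0

/-- The supercharacter `ξ_θ = Ind_{L(θ)}^{G(qⁿ)} ν_θ` of the finite group `G(qⁿ)`,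
for a character `θ ∈ Â(qⁿ)`. -/
noncomputable def xiSub (F : A ≃+* A) (n : ℕ) (θ : AddChar (fixedAdd F n) ℂˣ) :
    AlgGrp A → ℂ :=
  fun g => (Nat.card {x : AlgGrp A // LcP F n θ x} : ℂ)⁻¹ *
    ∑ᶠ x : (Gfix F n), nuzSub F n θ ((x : AlgGrp A) * g * (x : AlgGrp A)⁻¹)

/-- `ε(θ) : G → ℂ`, `ε(θ)(1+a) = θ(a)`. -/
noncomputable def epsC (θ : AddChar A ℂˣ) : AlgGrp A → ℂ := fun g => θ (gval g)

/-- The left-translation action of `G` on functions `G → ℂ`. -/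
def transl (g : AlgGrp A) (φ : AlgGrp A → ℂ) : AlgGrp A → ℂ := fun x => φ (g⁻¹ * x)

/-- The super `ℂ[G]`-module `V_θ`: the linear span of the `G`-orbit of `ε(θ)` inside
the `ℂ[G]`-module of all functions `G → ℂ` (with the left-translation action). -/
noncomputable def Vmod (θ : AddChar A ℂˣ) : Submodule ℂ (AlgGrp A → ℂ) :=
  Submodule.span ℂ (Set.range fun g : AlgGrp A => transl g (epsC θ))


section Aux15

lemma wordProd_append_singleton (a c : A) (l : List A) :
    wordProd a (l ++ [c]) = wordProd a l * c := by
  induction l generalizing a with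
  | nil => rfl
  | cons x l ih => simpa [wordProd] using ih (a * x)

lemma eq_zero_of_add_mul_self (hnil : IsNilpotentRing A) {b w : A}
    (h : w + b * w = 0) : w = 0 := by
  obtain ⟨N, -, hN⟩ := hnil
  have hbw : b * w = -w := eq_neg_of_add_eq_zero_left (by rwa [add_comm] at h)
  have key : ∀ k : ℕ, ∃ s : ℤ, w = s • (wordProd b (List.replicate k b) * w) := by
    intro k
    induction k with
    | zero => exact ⟨-1, by simp [wordProd, hbw]⟩
    | succ k ih =>
        obtain ⟨s, hs⟩ := ih
        refine ⟨-s, ?_⟩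
        rw [List.replicate_succ', wordProd_append_singleton, mul_assoc, hbw,
          mul_neg, smul_neg, neg_smul, neg_neg]
        exact hs
  obtain ⟨s, hs⟩ := key N
  rw [hN b (List.replicate N b) (by simp), zero_mul, smul_zero] at hs
  exact hs

lemma gval_bijective [Finite A] (hnil : IsNilpotentRing A) :
    Function.Bijective (gval (A := A)) := by
  refine ⟨gval_injective, fun b => ?_⟩
  have hfinP : Finite (PreQuasiregular A) :=
    Finite.of_injective PreQuasiregular.val fun x y hxy => by
      cases x; cases y; simpa using hxy
  have hinj : ∀ p : PreQuasiregular A, Function.Injective (p * ·) := by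
    intro p z₁ z₂ h
    have h' := congrArg PreQuasiregular.val h
    rw [PreQuasiregular.val_mul, PreQuasiregular.val_mul] at h'
    -- h' : z₁.val + p.val + p.val * z₁.val = z₂.val + p.val + p.val * z₂.val
    rw [add_right_comm z₁.val p.val _, add_right_comm z₂.val p.val _] at h'
    have h3 := add_right_cancel h'
    have h2 : (z₁.val - z₂.val) + p.val * (z₁.val - z₂.val) = 0 := by
      rw [mul_sub, sub_add_sub_comm, h3, sub_self]
    have h4 := eq_zero_of_add_mul_self hnil h2
    have h5 : z₁.val = z₂.val := sub_eq_zero.mp h4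
    cases z₁; cases z₂; simpa using h5
  have hsurj : ∀ p : PreQuasiregular A, ∃ z, p * z = 1 := fun p =>
    (Finite.injective_iff_surjective.mp (hinj p)) 1
  obtain ⟨y, hy⟩ := hsurj ⟨b⟩
  obtain ⟨z, hz⟩ := hsurj y
  have hbz : (⟨b⟩ : PreQuasiregular A) = z := by
    calc (⟨b⟩ : PreQuasiregular A) = ⟨b⟩ * (y * z) := by rw [hz, mul_one]
    _ = (⟨b⟩ * y) * z := (mul_assoc _ _ _).symm
    _ = z := by rw [hy, one_mul]
  have hyx : y * ⟨b⟩ = 1 := by rw [hbz]; exact hz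
  exact ⟨⟨⟨b⟩, y, hy, hyx⟩, rfl⟩

/-- The bijection `G ≃ A`, `g ↦ g - 1`, valid for nilpotent `A`. -/
noncomputable def gvalEquiv [Finite A] (hnil : IsNilpotentRing A) : AlgGrp A ≃ A :=
  Equiv.ofBijective _ (gval_bijective hnil)

@[simp] lemma gvalEquiv_apply [Finite A] (hnil : IsNilpotentRing A) (g : AlgGrp A) :
    gvalEquiv hnil g = gval g := rfl

lemma lact_def (g : AlgGrp A) (a : A) : lact g a = a + gval g * a := rfl

lemma ract_def (a : A) (g : AlgGrp A) : ract a g = a + a * gval g := rfl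

lemma lact_lact (g h : AlgGrp A) (a : A) : lact g (lact h a) = lact (g * h) a := by
  simp only [lact_def, gval_mul, add_mul, mul_add, mul_assoc]
  abel

@[simp] lemma lact_one (a : A) : lact (1 : AlgGrp A) a = a := by
  simp [lact_def]

lemma lact_inv_lact (g : AlgGrp A) (a : A) : lact g⁻¹ (lact g a) = a := by
  rw [lact_lact, inv_mul_cancel, lact_one]

lemma lact_lact_inv (g : AlgGrp A) (a : A) : lact g (lact g⁻¹ a) = a := by
  rw [lact_lact, mul_inv_cancel, lact_one]

lemma ract_ract (a : A) (g h : AlgGrp A) : ract (ract a g) h = ract a (g * h) := by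
  simp only [ract_def, gval_mul, add_mul, mul_add, mul_assoc]
  abel

@[simp] lemma ract_one (a : A) : ract a (1 : AlgGrp A) = a := by
  simp [ract_def]

lemma ract_inv_ract (a : A) (g : AlgGrp A) : ract (ract a g⁻¹) g = a := by
  rw [ract_ract, inv_mul_cancel, ract_one]

lemma mem_Lcent_iff (θ : AddChar A ℂˣ) (h : AlgGrp A) :
    h ∈ Lcent θ ↔ ∀ u : A, θ (gval h * u) = 1 := by
  constructor
  · intro hm u
    have h1 := hm (lact h u)
    rw [lact_inv_lact] at h1
    rw [lact_def, AddChar.map_add_eq_mul] at h1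
    exact left_eq_mul.mp h1
  · intro hm a
    have h2 : θ (lact h (lact h⁻¹ a)) = θ (lact h⁻¹ a) * θ (gval h * lact h⁻¹ a) := by
      rw [lact_def h (lact h⁻¹ a), AddChar.map_add_eq_mul]
    rw [lact_lact_inv, hm, mul_one] at h2
    exact h2.symm

lemma mem_Rcent_iff (θ : AddChar A ℂˣ) (h : AlgGrp A) :
    h ∈ Rcent θ ↔ ∀ u : A, θ (u * gval h) = 1 := by
  constructor
  · intro hm u
    have h1 := hm (ract u h)
    rw [ract_ract, mul_inv_cancel, ract_one] at h1
    rw [ract_def, AddChar.map_add_eq_mul] at h1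
    exact left_eq_mul.mp h1
  · intro hm a
    have h2 : θ (ract (ract a h⁻¹) h) = θ (ract a h⁻¹) * θ (ract a h⁻¹ * gval h) := by
      rw [ract_def (ract a h⁻¹) h, AddChar.map_add_eq_mul]
    rw [ract_inv_ract, hm, mul_one] at h2
    exact h2.symm

/-- The complex-valued additive character underlying a `ℂˣ`-valued one. -/
def toC (θ : AddChar A ℂˣ) : AddChar A ℂ where
  toFun a := θ a
  map_zero_eq_one' := by simp
  map_add_eq_mul' a b := by simp [AddChar.map_add_eq_mul]

@[simp] lemma toC_apply (θ : AddChar A ℂˣ) (a : A) : toC θ a = θ a := rfl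

lemma sum_theta_comp [Fintype A] (θ : AddChar A ℂˣ) (f : A →+ A) :
    ∑ u : A, (θ (f u) : ℂ) =
      if ∀ u : A, θ (f u) = 1 then (Fintype.card A : ℂ) else 0 := by
  classical
  have hiff : ((toC θ).compAddMonoidHom f = 0) ↔ ∀ u : A, θ (f u) = 1 := by
    constructor
    · intro h0 u
      have h1 := DFunLike.congr_fun h0 u
      simp only [AddChar.compAddMonoidHom_apply, toC_apply, AddChar.zero_apply] at h1
      exact Units.val_eq_one.mp h1
    · intro hc
      ext a
      simp [hc a]
  have h := AddChar.sum_eq_ite ((toC θ).compAddMonoidHom f)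
  simp only [AddChar.compAddMonoidHom_apply, toC_apply] at h
  rw [h, if_congr hiff rfl rfl]

lemma mulLeft_char_sum [Fintype A] (θ : AddChar A ℂˣ) (c : A) :
    ∑ u : A, (θ (c * u) : ℂ) =
      if ∀ u : A, θ (c * u) = 1 then (Fintype.card A : ℂ) else 0 := by
  exact sum_theta_comp θ (AddMonoidHom.mulLeft c)

lemma mulRight_char_sum [Fintype A] (θ : AddChar A ℂˣ) (c : A) :
    ∑ u : A, (θ (u * c) : ℂ) =
      if ∀ u : A, θ (u * c) = 1 then (Fintype.card A : ℂ) else 0 := by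
  exact sum_theta_comp θ (AddMonoidHom.mulRight c)

lemma sum_bact_right [Fintype A] [Fintype (AlgGrp A)] (hnil : IsNilpotentRing A)
    (θ : AddChar A ℂˣ) (g x : AlgGrp A) :
    ∑ y : AlgGrp A, (θ (bact x (gval g) y) : ℂ)
      = (Fintype.card A : ℂ) * nuz θ (x * g * x⁻¹) := by
  classical
  have hxg : (x * g * x⁻¹) * x = x * g := inv_mul_cancel_right (x * g) x
  have hcd : lact x (gval g) = gval (x * g * x⁻¹) + gval (x * g * x⁻¹) * gval x := by
    have e0 : gval x + gval (x * g * x⁻¹) + gval (x * g * x⁻¹) * gval x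
        = gval g + gval x + gval x * gval g := by
      rw [← gval_mul, ← gval_mul, hxg]
    have e1 : gval x + (gval (x * g * x⁻¹) + gval (x * g * x⁻¹) * gval x)
        = gval x + (gval g + gval x * gval g) := by
      rw [← add_assoc, e0]; abel
    rw [lact_def]
    exact (add_left_cancel e1).symm
  have hcu : ∀ u : A, lact x (gval g) * u = gval (x * g * x⁻¹) * lact x u := by
    intro u
    simp only [hcd, lact_def, add_mul, mul_add, mul_assoc]
  have hcond : (∀ u : A, θ (lact x (gval g) * u) = 1)
      ↔ ∀ u : A, θ (gval (x * g * x⁻¹) * u) = 1 := by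
    constructor
    · intro H u
      have h1 := H (lact x⁻¹ u)
      rwa [hcu, lact_lact_inv] at h1
    · intro H u
      rw [hcu]; exact H _
  have e2 : ∀ y : AlgGrp A, bact x (gval g) y = lact x (gval g) + lact x (gval g) * gval y :=
    fun y => rfl
  have e3 : ∑ y : AlgGrp A, (θ (bact x (gval g) y) : ℂ)
      = ∑ u : A, (θ (lact x (gval g)) : ℂ) * (θ (lact x (gval g) * u) : ℂ) :=
    Fintype.sum_equiv (gvalEquiv hnil) _ _ (fun y => by
      rw [e2 y, AddChar.map_add_eq_mul, Units.val_mul]; rfl)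
  rw [e3, ← Finset.mul_sum, mulLeft_char_sum θ (lact x (gval g))]
  by_cases H : ∀ u : A, θ (gval (x * g * x⁻¹) * u) = 1
  · rw [if_pos (hcond.mpr H)]
    have hmem : (x * g * x⁻¹) ∈ Lcent θ := (mem_Lcent_iff θ _).mpr H
    have hθc : θ (lact x (gval g)) = θ (gval (x * g * x⁻¹)) := by
      rw [hcd, AddChar.map_add_eq_mul, H (gval x), mul_one]
    rw [nuz, if_pos hmem, hθc]
    ring
  · rw [if_neg (fun hcc => H (hcond.mp hcc))]
    rw [nuz, if_neg (fun hm => H ((mem_Lcent_iff θ _).mp hm))]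
    ring

lemma sum_bact_left [Fintype A] [Fintype (AlgGrp A)] (hnil : IsNilpotentRing A)
    (θ : AddChar A ℂˣ) (g y : AlgGrp A) :
    ∑ x : AlgGrp A, (θ (bact x (gval g) y) : ℂ)
      = (Fintype.card A : ℂ) * nuzR θ (y⁻¹ * g * y) := by
  classical
  have hyg : y * (y⁻¹ * g * y) = g * y := by group
  have hcd : ract (gval g) y = gval (y⁻¹ * g * y) + gval y * gval (y⁻¹ * g * y) := by
    have e0 : gval (y⁻¹ * g * y) + gval y + gval y * gval (y⁻¹ * g * y)
        = gval y + gval g + gval g * gval y := by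
      rw [← gval_mul, ← gval_mul, hyg]
    have e1 : gval y + (gval (y⁻¹ * g * y) + gval y * gval (y⁻¹ * g * y))
        = gval y + (gval g + gval g * gval y) := by
      rw [show gval y + (gval (y⁻¹ * g * y) + gval y * gval (y⁻¹ * g * y))
          = gval (y⁻¹ * g * y) + gval y + gval y * gval (y⁻¹ * g * y) by abel, e0]
      abel
    rw [ract_def]
    exact (add_left_cancel e1).symm
  have hcu : ∀ u : A, u * ract (gval g) y = ract u y * gval (y⁻¹ * g * y) := by
    intro u
    simp only [hcd, ract_def, add_mul, mul_add, mul_assoc]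
  have hcond : (∀ u : A, θ (u * ract (gval g) y) = 1)
      ↔ ∀ u : A, θ (u * gval (y⁻¹ * g * y)) = 1 := by
    constructor
    · intro H u
      have h1 := H (ract u y⁻¹)
      rwa [hcu, ract_inv_ract] at h1
    · intro H u
      rw [hcu]; exact H _
  have e2 : ∀ x : AlgGrp A, bact x (gval g) y = ract (gval g) y + gval x * ract (gval g) y := by
    intro x
    simp only [bact, ract_def, lact_def, add_mul, mul_add, mul_assoc]
    abel
  have e3 : ∑ x : AlgGrp A, (θ (bact x (gval g) y) : ℂ)
      = ∑ u : A, (θ (ract (gval g) y) : ℂ) * (θ (u * ract (gval g) y) : ℂ) :=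
    Fintype.sum_equiv (gvalEquiv hnil) _ _ (fun x => by
      rw [e2 x, AddChar.map_add_eq_mul, Units.val_mul]; rfl)
  rw [e3, ← Finset.mul_sum, mulRight_char_sum θ (ract (gval g) y)]
  by_cases H : ∀ u : A, θ (u * gval (y⁻¹ * g * y)) = 1
  · rw [if_pos (hcond.mpr H)]
    have hmem : (y⁻¹ * g * y) ∈ Rcent θ := (mem_Rcent_iff θ _).mpr H
    have hθc : θ (ract (gval g) y) = θ (gval (y⁻¹ * g * y)) := by
      rw [hcd, AddChar.map_add_eq_mul, H (gval y), mul_one]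
    rw [nuzR, if_pos hmem, hθc]
    ring
  · rw [if_neg (fun hcc => H (hcond.mp hcc))]
    rw [nuzR, if_neg (fun hm => H ((mem_Rcent_iff θ _).mp hm))]
    ring

lemma card_Lcent_eq_card_Rcent [Fintype A] (hnil : IsNilpotentRing A) (θ : AddChar A ℂˣ) :
    Nat.card (Lcent θ) = Nat.card (Rcent θ) := by
  classical
  have hL : Nat.card (Lcent θ) = Nat.card {b : A // ∀ u : A, θ (b * u) = 1} :=
    Nat.card_congr ((gvalEquiv hnil).subtypeEquiv fun g => by
      simpa using mem_Lcent_iff θ g)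
  have hR : Nat.card (Rcent θ) = Nat.card {b : A // ∀ u : A, θ (u * b) = 1} :=
    Nat.card_congr ((gvalEquiv hnil).subtypeEquiv fun g => by
      simpa using mem_Rcent_iff θ g)
  rw [hL, hR]
  have count1 : ∑ b : A, ∑ u : A, (θ (b * u) : ℂ)
      = (Fintype.card A : ℂ) * (Nat.card {b : A // ∀ u : A, θ (b * u) = 1}) := by
    rw [Finset.sum_congr rfl (fun b _ => mulLeft_char_sum θ b),
      ← Finset.sum_filter, Finset.sum_const, nsmul_eq_mul,
      Nat.card_eq_fintype_card, Fintype.card_subtype]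
    ring
  have count2 : ∑ b : A, ∑ u : A, (θ (b * u) : ℂ)
      = (Fintype.card A : ℂ) * (Nat.card {b : A // ∀ u : A, θ (u * b) = 1}) := by
    rw [Finset.sum_comm,
      Finset.sum_congr rfl (fun u _ => mulRight_char_sum θ u),
      ← Finset.sum_filter, Finset.sum_const, nsmul_eq_mul,
      Nat.card_eq_fintype_card, Fintype.card_subtype]
    ring
  have hA0 : (Fintype.card A : ℂ) ≠ 0 := Nat.cast_ne_zero.mpr Fintype.card_ne_zero
  have := mul_left_cancel₀ hA0 (count1.symm.trans count2)
  exact_mod_cast this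

end Aux15


section FiniteLevel

/- Context: `q` a prime power, `K = 𝔽_{qⁿ}` a finite field with `qⁿ` elements, `A` a
finite-dimensional nilpotent associative `K`-algebra (`A = A(qⁿ) = A₀ ⊗_{𝔽_q} 𝔽_{qⁿ}`), with
algebra group `G(qⁿ) = 1 + A`, and `F : A → A` the Frobenius map: a `q`-semilinear ring
automorphism with `Fⁿ = id`. -/
variable {q n : ℕ} {K : Type*} [Field K] [Fintype K]
variable {A : Type*} [NonUnitalRing A] [Module K A] [IsScalarTower K A A]
  [SMulCommClass K A A] [Fintype A]

/-- For every `θ ∈ Â(qⁿ)`, inducing the linear character `ν'_θ` from the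
right centraliser `R(θ)` gives the same character of `G(qⁿ)` as inducing `ν_θ` from the
left centraliser `L(θ)`. -/
theorem statement15
    (hq : IsPrimePow q) (hn : 0 < n) (hK : Fintype.card K = q ^ n)
    (hnil : IsNilpotentRing A)
    (F : A ≃+* A) (hFsemi : ∀ (c : K) (a : A), F (c • a) = c ^ q • F a)
    (hFn : ∀ a : A, (⇑F)^[n] a = a)
    (θ : AddChar A ℂˣ) (g : AlgGrp A) :
    (Nat.card (Lcent θ) : ℂ)⁻¹ * ∑ᶠ x : AlgGrp A, nuz θ (x * g * x⁻¹) =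
      (Nat.card (Rcent θ) : ℂ)⁻¹ * ∑ᶠ x : AlgGrp A, nuzR θ (x * g * x⁻¹) := by
  classical
  haveI hfinP : Finite (PreQuasiregular A) :=
    Finite.of_injective PreQuasiregular.val fun x y hxy => by
      cases x; cases y; simpa using hxy
  haveI : Fintype (AlgGrp A) := Fintype.ofFinite _
  rw [finsum_eq_sum_of_fintype, finsum_eq_sum_of_fintype,
    card_Lcent_eq_card_Rcent hnil θ]
  congr 1
  have hA0 : (Fintype.card A : ℂ) ≠ 0 := Nat.cast_ne_zero.mpr Fintype.card_ne_zero
  apply mul_left_cancel₀ hA0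
  calc (Fintype.card A : ℂ) * ∑ x : AlgGrp A, nuz θ (x * g * x⁻¹)
      = ∑ x : AlgGrp A, (Fintype.card A : ℂ) * nuz θ (x * g * x⁻¹) := Finset.mul_sum _ _ _
    _ = ∑ x : AlgGrp A, ∑ y : AlgGrp A, (θ (bact x (gval g) y) : ℂ) :=
        Finset.sum_congr rfl fun x _ => (sum_bact_right hnil θ g x).symm
    _ = ∑ y : AlgGrp A, ∑ x : AlgGrp A, (θ (bact x (gval g) y) : ℂ) := Finset.sum_comm
    _ = ∑ y : AlgGrp A, (Fintype.card A : ℂ) * nuzR θ (y⁻¹ * g * y) :=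
        Finset.sum_congr rfl fun y _ => sum_bact_left hnil θ g y
    _ = (Fintype.card A : ℂ) * ∑ y : AlgGrp A, nuzR θ (y⁻¹ * g * y) :=
        (Finset.mul_sum _ _ _).symm
    _ = (Fintype.card A : ℂ) * ∑ y : AlgGrp A, nuzR θ (y * g * y⁻¹) := by
        congr 1
        exact Fintype.sum_equiv (Equiv.inv (AlgGrp A)) _ _ (fun y => by simp)

end FiniteLevel

end Shintani
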